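/- For a hyperbolic automorphism ψ of 𝔻 with fixed points a, b on the unit circle and any w ∈ ℂ, the function h_w(z) = ((b−z)/(a−z))^w satisfies h_w(ψ(z)) = e^{δw} h_w(z) for all z ∈ 𝔻, where δ = −log ψ'(a). -/

import Mathlib

/-!
An injective holomorphic self-map `ψ` of the disc that is continuous up to the circle maps the
circle to itself, by the open mapping theorem. If `ψ' p ≠ 0` and `q = ψ p`, then
`blaschke q ∘ ψ` has unimodular boundary values and a single, simple zero at `p`; dividing it by
`blaschke p` leaves a zero-free function of modulus one on the circle, which the maximum
principle, applied to it and to its reciprocal, forces to be constant. Hence `ψ` is a Möbius map,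
`ψ z * (γ z + δ) = α z + β`. Evaluating this at the fixed points `a`, `b` and differentiating at
`a` gives `(b - ψ z) / (a - ψ z) = ψ'(a)⁻¹ (b - z) / (a - z)`; as `ψ'(a) > 0`, this positive
factor leaves the power as `exp (-w log ψ'(a))`.
-/

open Complex Filter Metric Set

noncomputable section

/-- A hyperbolic automorphism of the open unit disc `𝔻`, with attractive fixed
point `a` and repulsive fixed point `b` on the unit circle, and (real) derivative
values `da = ψ'(a) ∈ (0,1)`, `db = ψ'(b) ∈ (1,∞)` with `da * db = 1`. -/
structure HypAuto where
  ψ : ℂ → ℂ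
  a : ℂ
  b : ℂ
  da : ℝ
  db : ℝ
  ha : ‖a‖ = 1
  hb : ‖b‖ = 1
  hab : a ≠ b
  holo : ∃ R > 1, DifferentiableOn ℂ ψ (ball (0:ℂ) R)
  bij : BijOn ψ (ball (0:ℂ) 1) (ball (0:ℂ) 1)
  noFix : ∀ z ∈ ball (0:ℂ) 1, ψ z ≠ z
  fixa : ψ a = a
  fixb : ψ b = b
  hda : deriv ψ a = (da : ℂ)
  hdb : deriv ψ b = (db : ℂ)
  hda1 : 0 < da ∧ da < 1
  hdb1 : 1 < db
  hmulder : da * db = 1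
  attract : ∀ z ∈ ball (0:ℂ) 1, Tendsto (fun n => ψ^[n] z) atTop (nhds a)

open ComplexConjugate Topology

theorem Set.BijOn.mapsTo_frontier {X Y : Type*} [TopologicalSpace X] [T2Space X]
    [TopologicalSpace Y] {f : X → Y} {U : Set X} {V : Set Y} (hf : BijOn f U V) (hU : IsOpen U)
    (hc : ContinuousOn f (closure U)) (hopen : ∀ s ⊆ U, IsOpen s → IsOpen (f '' s)) :
    MapsTo f (frontier U) (frontier V) := by
  intro ζ hζ
  rw [hU.frontier_eq] at hζ
  obtain ⟨hζU', hζU⟩ := hζ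
  rw [(hf.image_eq ▸ hopen U subset_rfl hU : IsOpen V).frontier_eq, ← hf.image_eq]
  refine ⟨hc.image_closure (mem_image_of_mem f hζU'), ?_⟩
  rintro ⟨x, hxU, hfx⟩
  obtain ⟨u, v, hu, hv, hxu, hζv, huv⟩ := t2_separation (ne_of_mem_of_not_mem hxU hζU)
  have himg : f '' (U ∩ u) ∈ 𝓝 (f ζ) :=
    (hopen _ inter_subset_left (hU.inter hu)).mem_nhds ⟨x, ⟨hxU, hxu⟩, hfx⟩
  have : (𝓝[U] ζ).NeBot := mem_closure_iff_nhdsWithin_neBot.mp hζU'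
  have hlim : Tendsto f (𝓝[U] ζ) (𝓝 (f ζ)) := ((hc ζ hζU').mono subset_closure).tendsto
  have hv' : ∀ᶠ z in 𝓝[U] ζ, z ∈ v :=
    eventually_nhdsWithin_of_eventually_nhds (hv.eventually_mem hζv)
  obtain ⟨z, ⟨y, ⟨hyU, hyu⟩, hfy⟩, hzv, hzU⟩ :=
    ((hlim.eventually_mem himg).and (hv'.and self_mem_nhdsWithin)).exists
  exact disjoint_left.mp huv (hf.injOn hyU hzU hfy ▸ hyu) hzv

theorem exists_deriv_ne_zero_of_injOn {𝕜 : Type*} [RCLike 𝕜] {f : 𝕜 → 𝕜} {s : Set 𝕜}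
    (hs : IsOpen s) (hs' : IsPreconnected s) (hs'' : s.Nontrivial) (hd : DifferentiableOn 𝕜 f s)
    (hf : InjOn f s) : ∃ z ∈ s, deriv f z ≠ 0 := by
  by_contra! h
  obtain ⟨x, hx, y, hy, hxy⟩ := hs''
  exact hxy (hf hx hy (hs.is_const_of_deriv_eq_zero hs' hd h hx hy))

theorem mapsTo_sphere_of_bijOn_ball {f : ℂ → ℂ} (hc : ContinuousOn f (closedBall 0 1))
    (hd : DifferentiableOn ℂ f (ball 0 1)) (hf : BijOn f (ball 0 1) (ball 0 1)) :
    MapsTo f (sphere 0 1) (sphere 0 1) := by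
  have hopen : ∀ s ⊆ ball (0 : ℂ) 1, IsOpen s → IsOpen (f '' s) := by
    refine ((hd.analyticOnNhd isOpen_ball).is_constant_or_isOpen
      (convex_ball 0 1).isPreconnected).resolve_left ?_
    rintro ⟨c, hconst⟩
    obtain ⟨x, hx, y, hy, hxy⟩ :=
      (infinite_of_mem_nhds (0 : ℂ) (ball_mem_nhds 0 one_pos)).nontrivial
    exact hxy (hf.injOn hx hy ((hconst x hx).trans (hconst y hy).symm))
  simpa only [frontier_ball _ one_ne_zero] using
    hf.mapsTo_frontier isOpen_ball (by rwa [closure_ball _ one_ne_zero]) hopen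

theorem one_sub_conj_mul_ne_zero {p z : ℂ} (hp : ‖p‖ < 1) (hz : ‖z‖ ≤ 1) :
    1 - conj p * z ≠ 0 := by
  intro h
  have : ‖conj p * z‖ = 1 := by rw [← sub_eq_zero.mp h, norm_one]
  rw [norm_mul, norm_conj] at this
  nlinarith [norm_nonneg p, norm_nonneg z]

theorem norm_one_sub_conj_mul {p z : ℂ} (hz : ‖z‖ = 1) : ‖1 - conj p * z‖ = ‖z - p‖ := by
  have : 1 - conj p * z = z * conj (z - p) := by
    rw [map_sub, mul_sub, mul_conj, normSq_eq_norm_sq, hz]; push_cast; ring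
  rw [this, norm_mul, hz, norm_conj, one_mul]

def blaschke (p z : ℂ) : ℂ := (p - z) / (1 - conj p * z)

theorem norm_blaschke {p z : ℂ} (hp : ‖p‖ < 1) (hz : ‖z‖ = 1) : ‖blaschke p z‖ = 1 := by
  have hzp : z - p ≠ 0 := sub_ne_zero.2 fun h => by rw [h] at hz; linarith
  rw [blaschke, norm_div, norm_one_sub_conj_mul hz, norm_sub_rev,
    div_self (norm_ne_zero_iff.2 hzp)]

theorem blaschke_eq_zero_iff {p z : ℂ} (hp : ‖p‖ < 1) (hz : ‖z‖ ≤ 1) :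
    blaschke p z = 0 ↔ z = p := by
  rw [blaschke, div_eq_zero_iff, sub_eq_zero, eq_comm]
  simp [one_sub_conj_mul_ne_zero hp hz]

theorem differentiableAt_blaschke {p z : ℂ} (hp : ‖p‖ < 1) (hz : ‖z‖ ≤ 1) :
    DifferentiableAt ℂ (blaschke p) z :=
  (differentiableAt_id.const_sub p).div ((differentiableAt_id.const_mul _).const_sub 1)
    (one_sub_conj_mul_ne_zero hp hz)

theorem deriv_blaschke_self_ne_zero {p : ℂ} (hp : ‖p‖ < 1) : deriv (blaschke p) p ≠ 0 := by
  have hden := one_sub_conj_mul_ne_zero hp hp.le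
  have hB : HasDerivAt (blaschke p) (((-1) * (1 - conj p * p) - (p - p) * -(conj p * 1)) /
      (1 - conj p * p) ^ 2) p :=
    ((hasDerivAt_id p).const_sub p).div ((hasDerivAt_id p).const_mul (conj p) |>.const_sub 1) hden
  rw [hB.deriv, sub_self, zero_mul, sub_zero]
  exact div_ne_zero (mul_ne_zero (by norm_num) hden) (pow_ne_zero _ hden)

theorem eqOn_const_of_norm_eq_one_on_frontier {f : ℂ → ℂ} {U : Set ℂ}
    (hUb : Bornology.IsBounded U) (hUo : IsOpen U) (hUc : IsPreconnected U)
    (hf : DiffContOnCl ℂ f U)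
    (hf0 : ∀ z ∈ closure U, f z ≠ 0) (hf1 : ∀ z ∈ frontier U, ‖f z‖ = 1) {c : ℂ} (hc : c ∈ U) :
    EqOn f (Function.const ℂ (f c)) U := by
  have hle : ∀ z ∈ closure U, ‖f z‖ ≤ 1 := fun z hz =>
    Complex.norm_le_of_forall_mem_frontier_norm_le hUb hf (fun z hz => (hf1 z hz).le) hz
  have hge : ∀ z ∈ closure U, 1 ≤ ‖f z‖ := fun z hz => by
    have := Complex.norm_le_of_forall_mem_frontier_norm_le hUb (hf.inv hf0)
      (fun z hz => by rw [Pi.inv_apply, norm_inv, hf1 z hz, inv_one]) hz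
    rwa [Pi.inv_apply, norm_inv, inv_le_one₀ (norm_pos_iff.2 (hf0 z hz))] at this
  exact Complex.eqOn_of_isPreconnected_of_isMaxOn_norm hUc hUo hf.differentiableOn hc
    fun z hz => (hle z (subset_closure hz)).trans (hge c (subset_closure hc))

theorem exists_mul_one_sub_conj_mul_eq_of_simple_zero {G : ℂ → ℂ} {p : ℂ}
    (hp : p ∈ ball (0 : ℂ) 1) (hc : ContinuousOn G (closedBall 0 1))
    (hd : DifferentiableOn ℂ G (ball 0 1)) (hG1 : ∀ z ∈ sphere (0 : ℂ) 1, ‖G z‖ = 1)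
    (hG0 : ∀ z ∈ ball (0 : ℂ) 1, G z = 0 ↔ z = p) (hGp : deriv G p ≠ 0) :
    ∃ μ : ℂ, ∀ z ∈ ball (0 : ℂ) 1, G z * (1 - conj p * z) = μ * (z - p) := by
  have hp1 : ‖p‖ < 1 := mem_ball_zero_iff.mp hp
  have hp0 : G p = 0 := (hG0 p hp).2 rfl
  have hslope : ∀ z ≠ p, dslope G p z = G z / (z - p) := fun z hz => by
    rw [dslope_of_ne _ hz, slope_def_field, hp0, sub_zero]
  -- `F = -G / blaschke p`, with the removable singularity at `p` filled in by `dslope`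
  set F : ℂ → ℂ := fun z => dslope G p z * (1 - conj p * z)
  have hF : DiffContOnCl ℂ F (ball 0 1) := by
    refine ⟨((differentiableOn_dslope (isOpen_ball.mem_nhds hp)).2 hd).mul (by fun_prop), ?_⟩
    rw [closure_ball _ one_ne_zero]
    have hp' : closedBall (0 : ℂ) 1 ∈ 𝓝 p :=
      mem_of_superset (isOpen_ball.mem_nhds hp) ball_subset_closedBall
    exact ((continuousOn_dslope hp').2 ⟨hc, hd.differentiableAt (isOpen_ball.mem_nhds hp)⟩).mul
      (by fun_prop)
  have hF1 : ∀ z ∈ sphere (0 : ℂ) 1, ‖F z‖ = 1 := fun z hz => by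
    have hz1 : ‖z‖ = 1 := mem_sphere_zero_iff_norm.mp hz
    have hzp : z - p ≠ 0 := sub_ne_zero.2 fun h => by rw [h] at hz1; linarith
    simp only [F]
    rw [hslope z (sub_ne_zero.1 hzp), norm_mul, norm_div, hG1 z hz, norm_one_sub_conj_mul hz1,
      one_div_mul_cancel (norm_ne_zero_iff.2 hzp)]
  have hF0 : ∀ z ∈ closedBall (0 : ℂ) 1, F z ≠ 0 := fun z hz => by
    have hz1 : ‖z‖ ≤ 1 := mem_closedBall_zero_iff.mp hz
    refine mul_ne_zero ?_ (one_sub_conj_mul_ne_zero hp1 hz1)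
    rcases eq_or_ne z p with rfl | hzp
    · rwa [dslope_same]
    rw [hslope z hzp]
    refine div_ne_zero (fun hGz => ?_) (sub_ne_zero.2 hzp)
    rcases hz1.lt_or_eq with hz1 | hz1
    · exact hzp ((hG0 z (mem_ball_zero_iff.2 hz1)).1 hGz)
    · simpa [hGz] using hG1 z (mem_sphere_zero_iff_norm.2 hz1)
  have hFconst := eqOn_const_of_norm_eq_one_on_frontier isBounded_ball isOpen_ball
    (convex_ball 0 1).isPreconnected hF (by rwa [closure_ball _ one_ne_zero])
    (by rwa [frontier_ball _ one_ne_zero]) hp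
  refine ⟨F p, fun z hz => ?_⟩
  rcases eq_or_ne z p with rfl | hzp
  · simp [hp0]
  have hFz : F z = F p := hFconst hz
  rw [← hFz]
  simp only [F, hslope z hzp]
  field_simp [sub_ne_zero.2 hzp]

theorem exists_mobius_relation_of_bijOn_ball {ψ : ℂ → ℂ} (hc : ContinuousOn ψ (closedBall 0 1))
    (hd : DifferentiableOn ℂ ψ (ball 0 1)) (hψ : BijOn ψ (ball 0 1) (ball 0 1)) :
    ∃ α β γ δ : ℂ, ∀ z ∈ ball (0 : ℂ) 1, γ * z + δ ≠ 0 ∧ ψ z * (γ * z + δ) = α * z + β := by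
  obtain ⟨p, hp, hψp⟩ := exists_deriv_ne_zero_of_injOn isOpen_ball
    (convex_ball 0 1).isPreconnected
    (infinite_of_mem_nhds (0 : ℂ) (ball_mem_nhds 0 one_pos)).nontrivial hd hψ.injOn
  set q := ψ p
  have hp1 : ‖p‖ < 1 := mem_ball_zero_iff.mp hp
  have hq1 : ‖q‖ < 1 := mem_ball_zero_iff.mp (hψ.mapsTo hp)
  have hψ1 : ∀ z ∈ closedBall (0 : ℂ) 1, ‖ψ z‖ ≤ 1 := fun z hz => by
    rcases (mem_closedBall_zero_iff.mp hz).lt_or_eq with hz | hz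
    · exact (mem_ball_zero_iff.mp (hψ.mapsTo (mem_ball_zero_iff.2 hz))).le
    · exact (mem_sphere_zero_iff_norm.mp
        (mapsTo_sphere_of_bijOn_ball hc hd hψ (mem_sphere_zero_iff_norm.2 hz))).le
  obtain ⟨μ, hμ⟩ := exists_mul_one_sub_conj_mul_eq_of_simple_zero (G := blaschke q ∘ ψ) hp
    (fun z hz => (differentiableAt_blaschke hq1 (hψ1 z hz)).continuousAt.comp_continuousWithinAt
      (hc z hz))
    (fun z hz => (differentiableAt_blaschke hq1
      (hψ1 z (ball_subset_closedBall hz))).comp_differentiableWithinAt z (hd z hz))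
    (fun z hz => norm_blaschke hq1 (mem_sphere_zero_iff_norm.mp
      (mapsTo_sphere_of_bijOn_ball hc hd hψ hz)))
    (fun z hz => by
      rw [Function.comp_apply, blaschke_eq_zero_iff hq1 (hψ1 z (ball_subset_closedBall hz)),
        hψ.injOn.eq_iff hz hp])
    (by
      rw [deriv_comp p (differentiableAt_blaschke hq1 hq1.le)
        (hd.differentiableAt (isOpen_ball.mem_nhds hp))]
      exact mul_ne_zero (deriv_blaschke_self_ne_zero hq1) hψp)
  refine ⟨μ + q * conj p, -(μ * p + q), μ * conj q + conj p, -(μ * conj q * p + 1),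
    fun z hz => ?_⟩
  have hz1 : ‖z‖ < 1 := mem_ball_zero_iff.mp hz
  have hden := one_sub_conj_mul_ne_zero hq1 (hψ1 z (ball_subset_closedBall hz))
  have h := hμ z hz
  simp only [Function.comp_apply, blaschke] at h
  rw [div_mul_eq_mul_div, div_eq_iff hden] at h
  have hrel : ψ z * ((μ * conj q + conj p) * z + -(μ * conj q * p + 1)) =
      (μ + q * conj p) * z + -(μ * p + q) := by
    linear_combination h
  refine ⟨fun hD => ?_, hrel⟩
  rw [hD, mul_zero] at hrel
  -- the numerator and the denominator cannot vanish together, since `‖q‖ < 1`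
  exact mul_ne_zero (one_sub_conj_mul_ne_zero hq1 hq1.le) (one_sub_conj_mul_ne_zero hp1 hz1.le)
    (by linear_combination -hD - conj q * hrel)

theorem mobius_relation_eqOn_ball {ψ : ℂ → ℂ} {α β γ δ : ℂ} {R : ℝ} (hR : 1 ≤ R)
    (hd : DifferentiableOn ℂ ψ (ball 0 R))
    (hrel : ∀ z ∈ ball (0 : ℂ) 1, ψ z * (γ * z + δ) = α * z + β) :
    EqOn (fun z => ψ z * (γ * z + δ)) (fun z => α * z + β) (ball 0 R) :=
  ((hd.mul (by fun_prop)).analyticOnNhd isOpen_ball).eqOn_of_preconnected_of_eventuallyEq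
    ((Differentiable.differentiableOn (by fun_prop)).analyticOnNhd isOpen_ball)
    (convex_ball 0 R).isPreconnected (mem_ball_self (by linarith))
    (eventually_of_mem (ball_mem_nhds 0 one_pos) hrel)

theorem mul_sub_mul_sub_eq_of_mobius_relation {ψ : ℂ → ℂ} {a b α β γ δ d z : ℂ} (hab : a ≠ b)
    (ha : ∀ᶠ u in 𝓝 a, ψ u * (γ * u + δ) = α * u + β) (hb : ψ b * (γ * b + δ) = α * b + β)
    (hψa : ψ a = a) (hψb : ψ b = b) (hd : HasDerivAt ψ d a)
    (hz : ψ z * (γ * z + δ) = α * z + β) (hDz : γ * z + δ ≠ 0) :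
    d * ((b - ψ z) * (a - z)) = (a - ψ z) * (b - z) := by
  have ha' := ha.self_of_nhds
  rw [hψa] at ha'
  rw [hψb] at hb
  have hα : α = γ * (a + b) + δ := by
    have : (a - b) * (α - γ * (a + b) - δ) = 0 := by linear_combination hb - ha'
    linear_combination (mul_eq_zero.1 this).resolve_left (sub_ne_zero.2 hab)
  have hdα : α * 1 = d * (γ * a + δ) + ψ a * (γ * 1) :=
    ((((hasDerivAt_id a).const_mul α).add_const β).congr_of_eventuallyEq ha).unique
      (hd.mul (((hasDerivAt_id a).const_mul γ).add_const δ))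
  rw [hψa] at hdα
  have hbz : (b - ψ z) * (γ * z + δ) = (b - z) * (γ * a + δ) := by
    linear_combination -hz + (a - z) * hα + ha'
  have haz : (a - ψ z) * (γ * z + δ) = (a - z) * (γ * b + δ) := by
    linear_combination -hz + (b - z) * hα + hb
  refine mul_right_cancel₀ hDz ?_
  linear_combination d * (a - z) * hbz - (b - z) * haz + (a - z) * (b - z) * (hα - hdα)

theorem ofReal_mul_cpow {r : ℝ} (hr : 0 < r) {x : ℂ} (hx : x ≠ 0) (w : ℂ) :
    ((r : ℂ) * x) ^ w = exp (Real.log r * w) * x ^ w := by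
  rw [cpow_def_of_ne_zero (mul_ne_zero (ofReal_ne_zero.2 hr.ne') hx), log_ofReal_mul hr hx,
    cpow_def_of_ne_zero hx, add_mul, exp_add]

/-- For any `w ∈ ℂ`, the function `h_w(z) = ((b-z)/(a-z))^w` satisfies
`h_w(ψ z) = e^{δw} h_w(z)` on `𝔻`, where `δ = -log ψ'(a)`. -/
theorem hw_eigenfunction_identity (h : HypAuto) (w : ℂ) :
    ∀ z ∈ ball (0:ℂ) 1,
      ((h.b - h.ψ z) / (h.a - h.ψ z)) ^ w =
        Complex.exp ((-Real.log h.da : ℂ) * w) * ((h.b - z) / (h.a - z)) ^ w := by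
  intro z hz
  obtain ⟨R, hR, hψ⟩ := h.holo
  obtain ⟨α, β, γ, δ, hrel⟩ := exists_mobius_relation_of_bijOn_ball
    (hψ.continuousOn.mono (closedBall_subset_ball hR)) (hψ.mono (ball_subset_ball hR.le)) h.bij
  have hrelR := mobius_relation_eqOn_ball hR.le hψ fun u hu => (hrel u hu).2
  have hR1 : ∀ {u : ℂ}, ‖u‖ = 1 → u ∈ ball (0 : ℂ) R := fun hu => by simpa [hu]
  have hcross := mul_sub_mul_sub_eq_of_mobius_relation h.hab
    (eventually_of_mem (isOpen_ball.mem_nhds (hR1 h.ha)) hrelR) (hrelR (hR1 h.hb)) h.fixa h.fixb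
    (h.hda ▸ (hψ.differentiableAt (isOpen_ball.mem_nhds (hR1 h.ha))).hasDerivAt)
    (hrel z hz).2 (hrel z hz).1
  have hne : ∀ {c : ℂ}, ‖c‖ = 1 → ∀ u ∈ ball (0 : ℂ) 1, c - u ≠ 0 := fun hc u hu =>
    sub_ne_zero.2 (sphere_disjoint_ball.ne_of_mem (mem_sphere_zero_iff_norm.2 hc) hu)
  have hdb : h.db = h.da⁻¹ := eq_inv_of_mul_eq_one_right h.hmulder
  have hratio : (h.b - h.ψ z) / (h.a - h.ψ z) = h.db * ((h.b - z) / (h.a - z)) := by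
    rw [hdb, ofReal_inv, div_eq_iff (hne h.ha _ (h.bij.mapsTo hz))]
    field_simp [hne h.ha z hz, ofReal_ne_zero.2 h.hda1.1.ne']
    linear_combination hcross
  rw [hratio, ofReal_mul_cpow (by linarith [h.hdb1])
    (div_ne_zero (hne h.hb z hz) (hne h.ha z hz)), hdb, Real.log_inv, ofReal_neg]
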